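/- (Sufficient descent of L during U and λ updates of DMTL-ELM.) Suppose that for every t, τ_t ≥ ρ m (δ + ½) σ_{t,max} − σ/2. Then the DMTL-ELM iterates satisfy, for every k ≥ 0: L(U^k, A^k, λ^k) − L(U^(k+1), A^k, λ^(k+1)) ≥ 0. -/

import Mathlib

open Matrix Filter Topology

/-- Frobenius inner product `⟨X,Y⟩ = tr(Xᵀ Y)`. -/
noncomputable def finner {α β : Type*} [Fintype α] [Fintype β]
    (X Y : Matrix α β ℝ) : ℝ := (Xᵀ * Y).trace

/-- Squared Frobenius norm `‖X‖² = tr(Xᵀ X)`. -/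
noncomputable def fnormSq {α β : Type*} [Fintype α] [Fintype β]
    (X : Matrix α β ℝ) : ℝ := finner X X

/-- Frobenius norm `‖X‖`. -/
noncomputable def fnorm {α β : Type*} [Fintype α] [Fintype β]
    (X : Matrix α β ℝ) : ℝ := Real.sqrt (fnormSq X)


section helpers

variable {α β : Type*} [Fintype α] [Fintype β]

lemma finner_comm (X Y : Matrix α β ℝ) : finner X Y = finner Y X := by
  unfold finner
  rw [← Matrix.trace_transpose, Matrix.transpose_mul, Matrix.transpose_transpose]

lemma finner_add_left (X Y Z : Matrix α β ℝ) :
    finner (X + Y) Z = finner X Z + finner Y Z := by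
  unfold finner; rw [Matrix.transpose_add, Matrix.add_mul, Matrix.trace_add]

lemma finner_add_right (X Y Z : Matrix α β ℝ) :
    finner X (Y + Z) = finner X Y + finner X Z := by
  unfold finner; rw [Matrix.mul_add, Matrix.trace_add]

lemma finner_smul_left (c : ℝ) (X Y : Matrix α β ℝ) :
    finner (c • X) Y = c * finner X Y := by
  unfold finner; rw [Matrix.transpose_smul, Matrix.smul_mul, Matrix.trace_smul, smul_eq_mul]

lemma finner_smul_right (c : ℝ) (X Y : Matrix α β ℝ) :
    finner X (c • Y) = c * finner X Y := by
  unfold finner; rw [Matrix.mul_smul, Matrix.trace_smul, smul_eq_mul]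

lemma finner_sub_left (X Y Z : Matrix α β ℝ) :
    finner (X - Y) Z = finner X Z - finner Y Z := by
  unfold finner; rw [Matrix.transpose_sub, Matrix.sub_mul, Matrix.trace_sub]

lemma finner_sub_right (X Y Z : Matrix α β ℝ) :
    finner X (Y - Z) = finner X Y - finner X Z := by
  unfold finner; rw [Matrix.mul_sub, Matrix.trace_sub]

lemma finner_sum_right {ι : Type*} (s : Finset ι) (X : Matrix α β ℝ)
    (f : ι → Matrix α β ℝ) : finner X (∑ i ∈ s, f i) = ∑ i ∈ s, finner X (f i) := by
  unfold finner; rw [Matrix.mul_sum, Matrix.trace_sum]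

lemma finner_sum_left {ι : Type*} (s : Finset ι) (X : Matrix α β ℝ)
    (f : ι → Matrix α β ℝ) : finner (∑ i ∈ s, f i) X = ∑ i ∈ s, finner (f i) X := by
  rw [finner_comm, finner_sum_right]
  exact Finset.sum_congr rfl fun i _ => finner_comm _ _

lemma finner_entries (X Y : Matrix α β ℝ) :
    finner X Y = ∑ b : β, ∑ a : α, X a b * Y a b := by
  unfold finner Matrix.trace
  simp [Matrix.diag, Matrix.mul_apply]

lemma fnormSq_nonneg (X : Matrix α β ℝ) : 0 ≤ fnormSq X := by
  rw [fnormSq, finner_entries]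
  exact Finset.sum_nonneg fun b _ => Finset.sum_nonneg fun a _ => mul_self_nonneg _

lemma fnormSq_add (X Y : Matrix α β ℝ) :
    fnormSq (X + Y) = fnormSq X + 2 * finner X Y + fnormSq Y := by
  unfold fnormSq
  rw [finner_add_left, finner_add_right, finner_add_right, finner_comm Y X]; ring

lemma fnormSq_sub (X Y : Matrix α β ℝ) :
    fnormSq (X - Y) = fnormSq X - 2 * finner X Y + fnormSq Y := by
  unfold fnormSq
  rw [finner_sub_left, finner_sub_right, finner_sub_right, finner_comm Y X]; ring

lemma fnormSq_smul (c : ℝ) (X : Matrix α β ℝ) :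
    fnormSq (c • X) = c ^ 2 * fnormSq X := by
  unfold fnormSq; rw [finner_smul_left, finner_smul_right]; ring

lemma finner_le_half (X Y : Matrix α β ℝ) :
    finner X Y ≤ (fnormSq X + fnormSq Y) / 2 := by
  have h := fnormSq_nonneg (X - Y)
  rw [fnormSq_sub] at h; linarith

/-- midpoint identity for the squared norm around a shift `u` -/
lemma fnormSq_mid0 (X Y : Matrix α β ℝ) :
    fnormSq X + fnormSq Y - 2 * fnormSq ((1/2 : ℝ) • (X + Y))
      = (1/2) * fnormSq (X - Y) := by
  rw [fnormSq_smul, fnormSq_add, fnormSq_sub]; ring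

lemma fnormSq_mid (X Y u : Matrix α β ℝ) :
    fnormSq (X - u) + fnormSq (Y - u) - 2 * fnormSq ((1/2 : ℝ) • (X + Y) - u)
      = (1/2) * fnormSq (X - Y) := by
  have h : (1/2 : ℝ) • (X + Y) - u = (1/2 : ℝ) • ((X - u) + (Y - u)) := by
    module
  have h2 : X - Y = (X - u) - (Y - u) := by module
  rw [h, h2]
  exact fnormSq_mid0 (X - u) (Y - u)

lemma fnormSq_mid_add (X Y R : Matrix α β ℝ) :
    fnormSq (X + R) + fnormSq (Y + R) - 2 * fnormSq ((1/2 : ℝ) • (X + Y) + R)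
      = (1/2) * fnormSq (X - Y) := by
  have := fnormSq_mid X Y (-R)
  simpa [sub_neg_eq_add] using this

/-- squared-norm of a sum of `m` terms is at most `m` times the sum of squared norms -/
lemma fnormSq_sum_le {ι : Type*} [Fintype ι] (f : ι → Matrix α β ℝ) :
    fnormSq (∑ i, f i) ≤ (Fintype.card ι : ℝ) * ∑ i, fnormSq (f i) := by
  rw [fnormSq, finner_sum_left]
  calc (∑ i, finner (f i) (∑ j, f j)) = ∑ i, ∑ j, finner (f i) (f j) := by
        exact Finset.sum_congr rfl fun i _ => finner_sum_right _ _ _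
    _ ≤ ∑ i : ι, ∑ j : ι, (fnormSq (f i) + fnormSq (f j)) / 2 := by
        refine Finset.sum_le_sum fun i _ => Finset.sum_le_sum fun j _ => finner_le_half _ _
    _ = (Fintype.card ι : ℝ) * ∑ i, fnormSq (f i) := by
        have e : ∀ i : ι, ∑ j : ι, (fnormSq (f i) + fnormSq (f j)) / 2
            = ((Fintype.card ι : ℝ) * fnormSq (f i) + ∑ j, fnormSq (f j)) / 2 := by
          intro i
          rw [← Finset.sum_div, Finset.sum_add_distrib, Finset.sum_const,
            Finset.card_univ, nsmul_eq_mul]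
        rw [Finset.sum_congr rfl fun i _ => e i, ← Finset.sum_div,
          Finset.sum_add_distrib, ← Finset.mul_sum, Finset.sum_const,
          Finset.card_univ, nsmul_eq_mul]
        ring

end helpers

section pqsec

variable {α β : Type*} [Fintype α] [Fintype β]

/-- quadratic form `tr(Xᵀ P X)` -/
noncomputable def pq (P : Matrix α α ℝ) (X : Matrix α β ℝ) : ℝ := (Xᵀ * P * X).trace

lemma pq_add (P : Matrix α α ℝ) (X Y : Matrix α β ℝ) :
    pq P (X + Y) = pq P X + pq P Y + (Xᵀ * P * Y).trace + (Yᵀ * P * X).trace := by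
  unfold pq
  rw [Matrix.transpose_add, Matrix.add_mul, Matrix.add_mul, Matrix.mul_add,
    Matrix.mul_add, Matrix.trace_add, Matrix.trace_add, Matrix.trace_add]
  ring

lemma pq_sub (P : Matrix α α ℝ) (X Y : Matrix α β ℝ) :
    pq P (X - Y) = pq P X + pq P Y - (Xᵀ * P * Y).trace - (Yᵀ * P * X).trace := by
  unfold pq
  rw [Matrix.transpose_sub, Matrix.sub_mul, Matrix.sub_mul, Matrix.mul_sub,
    Matrix.mul_sub, Matrix.trace_sub, Matrix.trace_sub, Matrix.trace_sub]
  ring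

lemma pq_smul (P : Matrix α α ℝ) (c : ℝ) (X : Matrix α β ℝ) :
    pq P (c • X) = c ^ 2 * pq P X := by
  unfold pq
  rw [Matrix.transpose_smul, Matrix.smul_mul, Matrix.smul_mul, Matrix.mul_smul,
    Matrix.trace_smul, Matrix.trace_smul, smul_eq_mul, smul_eq_mul]
  ring

lemma pq_zero (P : Matrix α α ℝ) : pq P (0 : Matrix α β ℝ) = 0 := by
  unfold pq; simp

/-- midpoint identity for the quadratic form -/
lemma pq_mid0 (P : Matrix α α ℝ) (X Y : Matrix α β ℝ) :
    pq P X + pq P Y - 2 * pq P ((1/2 : ℝ) • (X + Y)) = (1/2) * pq P (X - Y) := by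
  rw [pq_smul, pq_add, pq_sub]; ring

lemma pq_mid (P : Matrix α α ℝ) (X Y u : Matrix α β ℝ) :
    pq P (X - u) + pq P (Y - u) - 2 * pq P ((1/2 : ℝ) • (X + Y) - u)
      = (1/2) * pq P (X - Y) := by
  have h : (1/2 : ℝ) • (X + Y) - u = (1/2 : ℝ) • ((X - u) + (Y - u)) := by module
  have h2 : X - Y = (X - u) - (Y - u) := by module
  rw [h, h2]
  exact pq_mid0 P (X - u) (Y - u)

lemma pq_nonneg {P : Matrix α α ℝ} (hP : P.PosSemidef) (X : Matrix α β ℝ) :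
    0 ≤ pq P X := by
  unfold pq
  rw [Matrix.trace]
  refine Finset.sum_nonneg fun b _ => ?_
  have h := hP.dotProduct_mulVec_nonneg (fun i => X i b)
  simp only [star_trivial, dotProduct, Matrix.mulVec, Matrix.mul_apply] at h ⊢
  calc (0:ℝ) ≤ ∑ i, X i b * ∑ j, P i j * X j b := h
    _ = (Xᵀ * P * X).diag b := by
        simp [Matrix.diag, Matrix.mul_apply, Finset.mul_sum, Finset.sum_mul]
        rw [Finset.sum_comm]
        refine Finset.sum_congr rfl fun i _ => Finset.sum_congr rfl fun j _ => by ring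

/-- the specific quadratic forms appearing in the proof -/
lemma pq_smul_one_sub [DecidableEq α] (c e : ℝ) {γ' : Type*} [Fintype γ'] (C : Matrix γ' α ℝ)
    (X : Matrix α β ℝ) :
    pq (c • (1 : Matrix α α ℝ) - e • (Cᵀ * C)) X = c * fnormSq X - e * fnormSq (C * X) := by
  unfold pq fnormSq finner
  rw [Matrix.mul_sub, Matrix.sub_mul, Matrix.trace_sub]
  congr 1
  · rw [Matrix.mul_smul, Matrix.mul_one, Matrix.smul_mul, Matrix.trace_smul, smul_eq_mul]
  · rw [Matrix.mul_smul, Matrix.smul_mul, Matrix.trace_smul, smul_eq_mul,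
      Matrix.transpose_mul, Matrix.mul_assoc, Matrix.mul_assoc, Matrix.mul_assoc]

end pqsec

section updsec

lemma sum_update_sub {ι M : Type*} [Fintype ι] [DecidableEq ι] [AddCommGroup M]
    (f g : ι → M) (t : ι) (h : ∀ s, s ≠ t → f s = g s) :
    (∑ s, f s) = (∑ s, g s) + (f t - g t) := by
  have key : ∑ s, (f s - g s) = f t - g t := by
    refine Finset.sum_eq_single t (fun s _ hs => by rw [h s hs, sub_self]) (by simp)
  rw [← key, Finset.sum_sub_distrib]
  abel

end updsec

section specsec

variable {n : Type*} [Fintype n] [DecidableEq n]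

lemma smul_one_sub_posSemidef {M : Matrix n n ℝ} (hM : M.IsHermitian) {c : ℝ}
    (hc : IsGreatest (spectrum ℝ M) c) :
    (c • (1 : Matrix n n ℝ) - M).PosSemidef := by
  have hN : (c • (1 : Matrix n n ℝ) - M).IsHermitian := by
    refine Matrix.IsHermitian.sub ?_ hM
    simp [Matrix.IsHermitian, Matrix.conjTranspose_smul]
  have halg : c • (1 : Matrix n n ℝ) - M = (algebraMap ℝ (Matrix n n ℝ)) c - M := by
    rw [Algebra.algebraMap_eq_smul_one]
  refine hN.posSemidef_iff_eigenvalues_nonneg.mpr fun i => show (0:ℝ) ≤ hN.eigenvalues i from ?_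
  have hmem := hN.eigenvalues_mem_spectrum_real i
  revert hmem
  generalize hN.eigenvalues i = x
  intro hmem
  rw [halg, ← spectrum.singleton_sub_eq] at hmem
  obtain ⟨a, ha, b, hb, hab⟩ := Set.mem_sub.mp hmem
  rw [Set.mem_singleton_iff] at ha
  subst ha
  have := hc.2 hb
  linarith [hab ▸ sub_nonneg.mpr this]

lemma spec_greatest_nonneg {M : Matrix n n ℝ} (hM : M.PosSemidef) {c : ℝ}
    (hc : IsGreatest (spectrum ℝ M) c) : 0 ≤ c := by
  have h := hc.1
  rw [Matrix.IsHermitian.spectrum_real_eq_range_eigenvalues hM.1] at h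
  obtain ⟨i, hi⟩ := h
  exact hi ▸ hM.eigenvalues_nonneg i

end specsec

/-- Strong descent at an exact minimizer of a "quadratic-like" function:
if `x` minimizes `h` and `h` satisfies an exact midpoint identity with quadratic
gap `q`, then `h x + (1/2) q (x-y) ≤ h y`. -/
lemma strong_min {M : Type*} [AddCommGroup M] [Module ℝ M]
    (h q : M → ℝ) (x : M)
    (hmin : ∀ V, h x ≤ h V)
    (hmid : ∀ V, h x + h V - 2 * h ((1/2 : ℝ) • (x + V)) = (1/4) * q (x - V))
    (hq : ∀ (c : ℝ) (Z : M), q (c • Z) = c ^ 2 * q Z)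
    (y : M) : h x + (1/2) * q (x - y) ≤ h y := by
  let yseq : ℕ → M := fun n => Nat.rec y (fun _ w => (1/2 : ℝ) • (x + w)) n
  have hy0 : yseq 0 = y := rfl
  have hys : ∀ n, yseq (n+1) = (1/2 : ℝ) • (x + yseq n) := fun n => rfl
  have hdiff : ∀ n, x - yseq n = ((1/2 : ℝ) ^ n) • (x - y) := by
    intro n; induction n with
    | zero => simp [hy0]
    | succ n ih =>
        rw [hys n]
        have h1 : x - (1/2 : ℝ) • (x + yseq n) = (1/2 : ℝ) • (x - yseq n) := by module
        rw [h1, ih, smul_smul]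
        congr 1
        rw [pow_succ]; ring
  have hqn : ∀ n, q (x - yseq n) = ((1/2 : ℝ) ^ n) ^ 2 * q (x - y) := by
    intro n; rw [hdiff n, hq]
  have key : ∀ n, ((1/2 : ℝ) ^ n) * (h y - h x)
      = (h (yseq n) - h x)
        + ((1/2 : ℝ) ^ n * (1/2) - ((1/2 : ℝ) ^ n) ^ 2 * (1/2)) * q (x - y) := by
    intro n; induction n with
    | zero => simp [hy0]
    | succ n ih =>
        have hm := hmid (yseq n)
        rw [← hys n, hqn n] at hm
        simp only [pow_succ]
        linear_combination (1/2) * ih + (1/2) * hm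
  have hn : ∀ n, (1/2 - (1/2 : ℝ) ^ n * (1/2)) * q (x - y) ≤ h y - h x := by
    intro n
    have hk := key n
    have ha := hmin (yseq n)
    have hr : (0:ℝ) < (1/2 : ℝ) ^ n := by positivity
    have h2 : (1/2 : ℝ) ^ n * ((1/2 - (1/2 : ℝ) ^ n * (1/2)) * q (x - y))
        ≤ (1/2 : ℝ) ^ n * (h y - h x) := by nlinarith [hk, ha]
    exact le_of_mul_le_mul_left h2 hr
  have hpow : Filter.Tendsto (fun n : ℕ => ((1/2 : ℝ)) ^ n) Filter.atTop (nhds 0) :=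
    tendsto_pow_atTop_nhds_zero_of_lt_one (by norm_num) (by norm_num)
  have hlim : Filter.Tendsto
      (fun n : ℕ => ((1/2 : ℝ) - (1/2 : ℝ) ^ n * (1/2)) * q (x - y)) Filter.atTop
      (nhds (((1/2 : ℝ) - 0 * (1/2)) * q (x - y))) :=
    ((tendsto_const_nhds.sub (hpow.mul_const _)).mul_const _)
  have hfin : ((1/2 : ℝ) - 0 * (1/2)) * q (x - y) ≤ h y - h x :=
    le_of_tendsto' hlim hn
  have : (1/2 : ℝ) * q (x - y) ≤ h y - h x := by linarith [hfin]
  linarith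

set_option maxHeartbeats 1000000 in
/-- sufficient descent of the augmented Lagrangian during the `U` and `λ`
updates of DMTL-ELM, under `τ_t ≥ ρm(δ+½)σ_{t,max} − σ/2`. -/
theorem stmt8
    (m E L r d : ℕ) (hm : 1 ≤ m)
    (Nt : Fin m → ℕ)
    (H : ∀ t, Matrix (Fin (Nt t)) (Fin L) ℝ)
    (T : ∀ t, Matrix (Fin (Nt t)) (Fin d) ℝ)
    (C : Fin m → Matrix (Fin E × Fin L) (Fin L) ℝ)
    (μ1 μ2 ρ δ : ℝ) (hμ1 : 0 < μ1) (hμ2 : 0 < μ2) (hρ : 0 < ρ) (hδ : 0 < δ)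
    (τ ζ : Fin m → ℝ)
    -- the proximal matrices `P_t = τ_t I − ρ C_tᵀC_t` are positive semidefinite
    (hPpsd : ∀ t, (τ t • (1 : Matrix (Fin L) (Fin L) ℝ) - ρ • ((C t)ᵀ * C t)).PosSemidef)
    -- `σmax t` is the largest eigenvalue of `C_tᵀC_t`
    (σmax : Fin m → ℝ)
    (hσmax : ∀ t, IsGreatest (spectrum ℝ ((C t)ᵀ * C t)) (σmax t))
    -- `σ` is a strong-convexity modulus of `g1` and `g2`
    (σ : ℝ) (hσ0 : 0 < σ) (hσ : σ ≤ min (μ1 / (m : ℝ)) μ2)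
    -- `F t U A = f_t(U,A) + g1(U) + g2(A)`
    (F : Fin m → Matrix (Fin L) (Fin r) ℝ → Matrix (Fin r) (Fin d) ℝ → ℝ)
    (hF : ∀ t V B, F t V B = (1 / 2) * fnormSq (H t * V * B - T t)
        + (μ1 / (2 * (m : ℝ))) * fnormSq V + (μ2 / 2) * fnormSq B)
    -- the augmented Lagrangian
    (Lag : (Fin m → Matrix (Fin L) (Fin r) ℝ) → (Fin m → Matrix (Fin r) (Fin d) ℝ)
        → Matrix (Fin E × Fin L) (Fin r) ℝ → ℝ)
    (hLag : ∀ V B lm, Lag V B lm = (∑ t, F t (V t) (B t))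
        + finner lm (∑ t, C t * V t) + (ρ / 2) * fnormSq (∑ t, C t * V t))
    -- the iterates
    (U : ℕ → Fin m → Matrix (Fin L) (Fin r) ℝ)
    (A : ℕ → Fin m → Matrix (Fin r) (Fin d) ℝ)
    (lam : ℕ → Matrix (Fin E × Fin L) (Fin r) ℝ)
    (γ : ℕ → Fin E → ℝ)
    -- (i) `U_t^(k+1)` minimizes `U ↦ L(U, (U_i^k)_{i≠t}, A^k, λ^k) + ½‖U − U_t^k‖_{P_t}²`
    (hU : ∀ (k : ℕ) (t : Fin m) (V : Matrix (Fin L) (Fin r) ℝ),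
      Lag (Function.update (U k) t (U (k + 1) t)) (A k) (lam k)
        + (1 / 2) * ((U (k + 1) t - U k t)ᵀ
            * (τ t • (1 : Matrix (Fin L) (Fin L) ℝ) - ρ • ((C t)ᵀ * C t))
            * (U (k + 1) t - U k t)).trace
      ≤ Lag (Function.update (U k) t V) (A k) (lam k)
        + (1 / 2) * ((V - U k t)ᵀ
            * (τ t • (1 : Matrix (Fin L) (Fin L) ℝ) - ρ • ((C t)ᵀ * C t))
            * (V - U k t)).trace)
    -- step-size condition for `γ_i^(k+1)`:
    -- `0 < γ_i^(k+1)` and `γ_i^(k+1) ‖Ĉ_i U^(k+1)‖² ≤ δ ‖Ĉ_i (U^k − U^(k+1))‖²`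
    (hγ : ∀ (k : ℕ) (i : Fin E), 0 < γ (k + 1) i ∧
      γ (k + 1) i * fnormSq (∑ t, (C t).submatrix (fun j : Fin L => (i, j)) id * U (k + 1) t)
        ≤ δ * fnormSq (∑ t, (C t).submatrix (fun j : Fin L => (i, j)) id
            * (U k t - U (k + 1) t)))
    -- (ii) dual update `λ^(k+1) = λ^k − ρ γ^(k+1) Σ_t C_t U_t^(k+1)`
    (hlam : ∀ k : ℕ, lam (k + 1) = lam k
        - ρ • Matrix.of (fun (p : Fin E × Fin L) (j : Fin r) =>
            γ (k + 1) p.1 * (∑ t, C t * U (k + 1) t) p j))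
    -- (iii) `A_t^(k+1)` minimizes `A ↦ F_t(U_t^(k+1), A) + ½‖A − A_t^k‖_{Q_t}²`
    (hA : ∀ (k : ℕ) (t : Fin m) (B : Matrix (Fin r) (Fin d) ℝ),
      F t (U (k + 1) t) (A (k + 1) t) + (ζ t / 2) * fnormSq (A (k + 1) t - A k t)
      ≤ F t (U (k + 1) t) B + (ζ t / 2) * fnormSq (B - A k t))
    (hτ : ∀ t, ρ * (m : ℝ) * (δ + 1 / 2) * σmax t - σ / 2 ≤ τ t)
 :
    ∀ k : ℕ, Lag (U k) (A k) (lam k) - Lag (U (k + 1)) (A k) (lam (k + 1)) ≥ 0 := by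
    classical
  have hm0 : (0:ℝ) < (m:ℝ) := by exact_mod_cast Nat.lt_of_lt_of_le Nat.zero_lt_one hm
  have hσa : σ ≤ μ1 / (m:ℝ) := le_trans hσ (min_le_left _ _)
  -- spectral facts
  have hherm : ∀ t, ((C t)ᵀ * C t).IsHermitian := by
    intro t
    rw [← Matrix.conjTranspose_eq_transpose_of_trivial]
    exact Matrix.isHermitian_conjTranspose_mul_self _
  have hpsdM : ∀ t, ((C t)ᵀ * C t).PosSemidef := by
    intro t
    rw [← Matrix.conjTranspose_eq_transpose_of_trivial]
    exact Matrix.posSemidef_conjTranspose_mul_self _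
  have hσnn : ∀ t, 0 ≤ σmax t := fun t => spec_greatest_nonneg (hpsdM t) (hσmax t)
  have hCb : ∀ (t : Fin m) (X : Matrix (Fin L) (Fin r) ℝ),
      fnormSq (C t * X) ≤ σmax t * fnormSq X := by
    intro t X
    have hpsdN := smul_one_sub_posSemidef (hherm t) (hσmax t)
    have h := pq_nonneg hpsdN X
    have heq : (σmax t) • (1 : Matrix (Fin L) (Fin L) ℝ) - (C t)ᵀ * C t
        = (σmax t) • (1 : Matrix (Fin L) (Fin L) ℝ) - (1:ℝ) • ((C t)ᵀ * C t) := by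
      rw [one_smul]
    rw [heq, pq_smul_one_sub] at h
    linarith
  intro k
  set u : Fin m → Matrix (Fin L) (Fin r) ℝ := U k with hu
  set u' : Fin m → Matrix (Fin L) (Fin r) ℝ := U (k+1) with hu'
  set a : Fin m → Matrix (Fin r) (Fin d) ℝ := A k with ha
  set lmk : Matrix (Fin E × Fin L) (Fin r) ℝ := lam k with hlmk
  -- λ-step descent
  have hlstep : Lag u' a (lam (k+1)) ≤ Lag u' a lmk := by
    rw [hLag, hLag, hlam k]
    have h2 : 0 ≤ finner (Matrix.of fun (p : Fin E × Fin L) (j : Fin r) =>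
        γ (k+1) p.1 * (∑ t, C t * u' t) p j) (∑ t, C t * u' t) := by
      rw [finner_entries]
      refine Finset.sum_nonneg fun b _ => Finset.sum_nonneg fun p _ => ?_
      simp only [Matrix.of_apply]
      rw [mul_assoc]
      exact mul_nonneg (hγ k p.1).1.le (mul_self_nonneg _)
    rw [finner_sub_left, finner_smul_left]
    nlinarith [mul_nonneg hρ.le h2]
  -- expansion of the Lagrangian after a single-block update
  have hexp : ∀ (t : Fin m) (V : Matrix (Fin L) (Fin r) ℝ),
      Lag (Function.update u t V) a lmk
        = (∑ s, F s (u s) (a s)) - F t (u t) (a t) + F t V (a t)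
          + finner lmk ((∑ s, C s * u s) - C t * u t) + finner lmk (C t * V)
          + (ρ/2) * fnormSq (C t * V + ((∑ s, C s * u s) - C t * u t)) := by
    intro t V
    rw [hLag]
    have h1 := sum_update_sub (fun s => F s (Function.update u t V s) (a s))
      (fun s => F s (u s) (a s)) t (fun s hs => by simp only [Function.update_of_ne hs])
    simp only [Function.update_self] at h1
    have h2 := sum_update_sub (fun s => C s * Function.update u t V s)
      (fun s => C s * u s) t (fun s hs => by simp only [Function.update_of_ne hs])
    simp only [Function.update_self] at h2
    have hre : (∑ s, C s * u s) + (C t * V - C t * u t)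
        = C t * V + ((∑ s, C s * u s) - C t * u t) := by abel
    rw [h1, h2, hre, finner_add_right]
    ring
  -- per-block strong descent
  have hblock : ∀ t : Fin m,
      Lag (Function.update u t (u' t)) a lmk
        + (1/2) * pq (τ t • (1 : Matrix (Fin L) (Fin L) ℝ) - ρ • ((C t)ᵀ * C t)) (u' t - u t)
        + (1/2) * (fnormSq (H t * (u' t - u t) * a t)
            + 2 * ((μ1 / (2 * (m:ℝ))) * fnormSq (u' t - u t))
            + ρ * fnormSq (C t * (u' t - u t))
            + pq (τ t • (1 : Matrix (Fin L) (Fin L) ℝ) - ρ • ((C t)ᵀ * C t)) (u' t - u t))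
      ≤ Lag (Function.update u t (u t)) a lmk
        + (1/2) * pq (τ t • (1 : Matrix (Fin L) (Fin L) ℝ) - ρ • ((C t)ᵀ * C t)) (u t - u t) := by
    intro t
    have hmidt : ∀ V : Matrix (Fin L) (Fin r) ℝ,
        (Lag (Function.update u t (u' t)) a lmk
            + (1/2) * pq (τ t • (1 : Matrix (Fin L) (Fin L) ℝ) - ρ • ((C t)ᵀ * C t)) (u' t - u t))
        + (Lag (Function.update u t V) a lmk
            + (1/2) * pq (τ t • (1 : Matrix (Fin L) (Fin L) ℝ) - ρ • ((C t)ᵀ * C t)) (V - u t))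
        - 2 * (Lag (Function.update u t ((1/2 : ℝ) • (u' t + V))) a lmk
            + (1/2) * pq (τ t • (1 : Matrix (Fin L) (Fin L) ℝ) - ρ • ((C t)ᵀ * C t))
                ((1/2 : ℝ) • (u' t + V) - u t))
        = (1/4) * (fnormSq (H t * (u' t - V) * a t)
            + 2 * ((μ1 / (2 * (m:ℝ))) * fnormSq (u' t - V))
            + ρ * fnormSq (C t * (u' t - V))
            + pq (τ t • (1 : Matrix (Fin L) (Fin L) ℝ) - ρ • ((C t)ᵀ * C t)) (u' t - V)) := by
      intro V
      have Ex := hexp t (u' t)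
      have EV := hexp t V
      have Em := hexp t ((1/2 : ℝ) • (u' t + V))
      simp only [hF] at Ex EV Em
      -- identity for the data-fit term
      have id1 : (1/2 : ℝ) • (H t * u' t * a t + H t * V * a t)
          = H t * ((1/2 : ℝ) • (u' t + V)) * a t := by
        rw [Matrix.mul_smul, Matrix.smul_mul, Matrix.mul_add, Matrix.add_mul]
      have id3 : H t * u' t * a t - H t * V * a t = H t * (u' t - V) * a t := by
        rw [Matrix.mul_sub, Matrix.sub_mul]
      have e1 := fnormSq_mid (H t * u' t * a t) (H t * V * a t) (T t)
      rw [id1, id3] at e1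
      -- identity for the regularizer
      have e2 := fnormSq_mid0 (u' t) V
      have e2ν : (μ1 / (2 * (m:ℝ))) * (fnormSq (u' t) + fnormSq V
            - 2 * fnormSq ((1/2 : ℝ) • (u' t + V)))
          = (μ1 / (2 * (m:ℝ))) * ((1/2) * fnormSq (u' t - V)) := by rw [e2]
      -- identity for the linear term
      have id2 : (1/2 : ℝ) • (C t * u' t + C t * V) = C t * ((1/2 : ℝ) • (u' t + V)) := by
        rw [Matrix.mul_smul, Matrix.mul_add]
      have e3 : finner lmk (C t * ((1/2 : ℝ) • (u' t + V)))
          = (1/2) * (finner lmk (C t * u' t) + finner lmk (C t * V)) := by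
        rw [← id2, finner_smul_right, finner_add_right]
      -- identity for the penalty term
      have id4 : C t * u' t - C t * V = C t * (u' t - V) := (Matrix.mul_sub _ _ _).symm
      have e4 := fnormSq_mid_add (C t * u' t) (C t * V) ((∑ s, C s * u s) - C t * u t)
      rw [id2, id4] at e4
      have e4ρ : ρ * (fnormSq (C t * u' t + ((∑ s, C s * u s) - C t * u t))
            + fnormSq (C t * V + ((∑ s, C s * u s) - C t * u t))
            - 2 * fnormSq (C t * ((1/2 : ℝ) • (u' t + V)) + ((∑ s, C s * u s) - C t * u t)))
          = ρ * ((1/2) * fnormSq (C t * (u' t - V))) := by rw [e4]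
      -- identity for the proximal term
      have e5 := pq_mid (τ t • (1 : Matrix (Fin L) (Fin L) ℝ) - ρ • ((C t)ᵀ * C t))
        (u' t) V (u t)
      linarith [Ex, EV, Em, e1, e2ν, e3, e4ρ, e5]
    have hqt : ∀ (c : ℝ) (Z : Matrix (Fin L) (Fin r) ℝ),
        fnormSq (H t * (c • Z) * a t)
            + 2 * ((μ1 / (2 * (m:ℝ))) * fnormSq (c • Z))
            + ρ * fnormSq (C t * (c • Z))
            + pq (τ t • (1 : Matrix (Fin L) (Fin L) ℝ) - ρ • ((C t)ᵀ * C t)) (c • Z)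
        = c ^ 2 * (fnormSq (H t * Z * a t)
            + 2 * ((μ1 / (2 * (m:ℝ))) * fnormSq Z)
            + ρ * fnormSq (C t * Z)
            + pq (τ t • (1 : Matrix (Fin L) (Fin L) ℝ) - ρ • ((C t)ᵀ * C t)) Z) := by
      intro c Z
      have h1 : H t * (c • Z) * a t = c • (H t * Z * a t) := by
        rw [Matrix.mul_smul, Matrix.smul_mul]
      have h2 : C t * (c • Z) = c • (C t * Z) := Matrix.mul_smul _ _ _
      rw [h1, h2, fnormSq_smul, fnormSq_smul, fnormSq_smul, pq_smul]
      ring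
    exact strong_min
      (fun V => Lag (Function.update u t V) a lmk
        + (1/2) * pq (τ t • (1 : Matrix (Fin L) (Fin L) ℝ) - ρ • ((C t)ᵀ * C t)) (V - u t))
      (fun Z => fnormSq (H t * Z * a t)
        + 2 * ((μ1 / (2 * (m:ℝ))) * fnormSq Z)
        + ρ * fnormSq (C t * Z)
        + pq (τ t • (1 : Matrix (Fin L) (Fin L) ℝ) - ρ • ((C t)ᵀ * C t)) Z)
      (u' t) (fun V => hU k t V) hmidt hqt (u t)
  -- single-block difference formula
  have A1 : ∀ t : Fin m,
      Lag u a lmk - Lag (Function.update u t (u' t)) a lmk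
        = (F t (u t) (a t) - F t (u' t) (a t))
          - finner lmk (C t * (u' t - u t))
          - ρ * finner (∑ s, C s * u s) (C t * (u' t - u t))
          - (ρ/2) * fnormSq (C t * (u' t - u t)) := by
    intro t
    rw [hexp t (u' t), hLag]
    have hr1 : C t * u' t + ((∑ s, C s * u s) - C t * u t)
        = (∑ s, C s * u s) + C t * (u' t - u t) := by
      rw [Matrix.mul_sub]; abel
    rw [hr1, fnormSq_add]
    have hr2 : finner lmk ((∑ s, C s * u s) - C t * u t)
        = finner lmk (∑ s, C s * u s) - finner lmk (C t * u t) := finner_sub_right _ _ _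
    have hr3 : finner lmk (C t * (u' t - u t))
        = finner lmk (C t * u' t) - finner lmk (C t * u t) := by
      rw [Matrix.mul_sub, finner_sub_right]
    linarith [hr2, hr3]
  -- global difference formula
  have A2 : Lag u a lmk - Lag u' a lmk
      = (∑ t, (F t (u t) (a t) - F t (u' t) (a t)))
        - finner lmk (∑ t, C t * (u' t - u t))
        - ρ * finner (∑ s, C s * u s) (∑ t, C t * (u' t - u t))
        - (ρ/2) * fnormSq (∑ t, C t * (u' t - u t)) := by
    rw [hLag, hLag]
    have hS' : (∑ t, C t * u' t) = (∑ s, C s * u s) + (∑ t, C t * (u' t - u t)) := by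
      rw [← Finset.sum_add_distrib]
      refine Finset.sum_congr rfl fun t _ => ?_
      rw [Matrix.mul_sub]; abel
    rw [hS', fnormSq_add, finner_add_right, Finset.sum_sub_distrib]
    ring
  simp only [Finset.sum_sub_distrib] at A2
  -- per-block inequality in difference form
  have bt : ∀ t : Fin m,
      pq (τ t • (1 : Matrix (Fin L) (Fin L) ℝ) - ρ • ((C t)ᵀ * C t)) (u' t - u t)
        + (ρ/2) * fnormSq (C t * (u' t - u t))
        + (σ/2) * fnormSq (u' t - u t)
      ≤ (F t (u t) (a t) - F t (u' t) (a t))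
        - finner lmk (C t * (u' t - u t))
        - ρ * finner (∑ s, C s * u s) (C t * (u' t - u t))
        - (ρ/2) * fnormSq (C t * (u' t - u t)) := by
    intro t
    have h1 := hblock t
    have h2 := A1 t
    have hLy : Lag (Function.update u t (u t)) a lmk = Lag u a lmk := by
      rw [Function.update_eq_self]
    have hpq0 : pq (τ t • (1 : Matrix (Fin L) (Fin L) ℝ) - ρ • ((C t)ᵀ * C t)) (u t - u t)
        = 0 := by rw [sub_self, pq_zero]
    have hσf : σ * fnormSq (u' t - u t) ≤ (μ1 / (m:ℝ)) * fnormSq (u' t - u t) :=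
      mul_le_mul_of_nonneg_right hσa (fnormSq_nonneg _)
    have heqf : (μ1 / (m:ℝ)) * fnormSq (u' t - u t)
        = 2 * ((μ1 / (2 * (m:ℝ))) * fnormSq (u' t - u t)) := by
      have hmne : (m:ℝ) ≠ 0 := ne_of_gt hm0
      field_simp
    linarith [h1, h2, hLy, hpq0, hσf, heqf, fnormSq_nonneg (H t * (u' t - u t) * a t)]
  -- sum the per-block inequalities
  have bsum := Finset.sum_le_sum (fun t (_ : t ∈ Finset.univ) => bt t)
  simp only [Finset.sum_add_distrib, Finset.sum_sub_distrib, ← Finset.mul_sum] at bsum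
  -- rewrite the proximal quadratic forms
  have hpq : ∀ t : Fin m,
      pq (τ t • (1 : Matrix (Fin L) (Fin L) ℝ) - ρ • ((C t)ᵀ * C t)) (u' t - u t)
        = τ t * fnormSq (u' t - u t) - ρ * fnormSq (C t * (u' t - u t)) :=
    fun t => pq_smul_one_sub (τ t) ρ (C t) _
  have hpqsum : (∑ t, pq (τ t • (1 : Matrix (Fin L) (Fin L) ℝ) - ρ • ((C t)ᵀ * C t)) (u' t - u t))
      = (∑ t, τ t * fnormSq (u' t - u t)) - ρ * ∑ t, fnormSq (C t * (u' t - u t)) := by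
    simp only [hpq, Finset.sum_sub_distrib, ← Finset.mul_sum]
  -- finner of sums
  have lsum : finner lmk (∑ t, C t * (u' t - u t))
      = ∑ t, finner lmk (C t * (u' t - u t)) := finner_sum_right _ _ _
  have ssum : finner (∑ s, C s * u s) (∑ t, C t * (u' t - u t))
      = ∑ t, finner (∑ s, C s * u s) (C t * (u' t - u t)) := finner_sum_right _ _ _
  -- Cauchy–Schwarz-type bound for the coupled penalty
  have hDb : fnormSq (∑ t, C t * (u' t - u t))
      ≤ (m:ℝ) * ∑ t, fnormSq (C t * (u' t - u t)) := by
    have := fnormSq_sum_le (fun t => C t * (u' t - u t))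
    simpa [Fintype.card_fin] using this
  have hDb' : ρ * fnormSq (∑ t, C t * (u' t - u t))
      ≤ ρ * ((m:ℝ) * ∑ t, fnormSq (C t * (u' t - u t))) :=
    mul_le_mul_of_nonneg_left hDb hρ.le
  -- key coefficient bound, per block
  have key : ∀ t : Fin m,
      ρ * (m:ℝ) / 2 * fnormSq (C t * (u' t - u t))
        ≤ τ t * fnormSq (u' t - u t) + (σ/2) * fnormSq (u' t - u t) := by
    intro t
    have h1 := hCb t (u' t - u t)
    have h1' := mul_le_mul_of_nonneg_left h1 (by positivity : (0:ℝ) ≤ ρ * (m:ℝ) / 2)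
    have h2 := mul_le_mul_of_nonneg_right (hτ t) (fnormSq_nonneg (u' t - u t))
    have h3 : 0 ≤ ρ * (m:ℝ) * δ * (σmax t * fnormSq (u' t - u t)) := by
      have := mul_nonneg (hσnn t) (fnormSq_nonneg (u' t - u t))
      positivity
    nlinarith [h1', h2, h3]
  have keysum := Finset.sum_le_sum (fun t (_ : t ∈ Finset.univ) => key t)
  simp only [Finset.sum_add_distrib, ← Finset.mul_sum] at keysum
  -- conclude the U-step descent
  have hUstep : Lag u' a lmk ≤ Lag u a lmk := by
    nlinarith [A2, bsum, hpqsum, lsum, ssum, hDb', keysum]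
  linarith [hlstep, hUstep]
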